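/- arXiv:2511.12736 — 2 statements merged into one kernel-verified Lean document; each statement's English description precedes it below -/
import Mathlib

section
/- Let T be a well-pruned nonspecial ω₁-tree. Then ◊* implies ◊_T. -/
open Set

/-- The first uncountable ordinal `ω₁`. -/
noncomputable def omega1 : Ordinal := Ordinal.omega 1

section TreeDefs

variable {T : Type*} [PartialOrder T]

/-- In a tree, the set of strict predecessors of any node is linearly ordered. -/
def PredsChain (T : Type*) [PartialOrder T] : Prop :=
  ∀ t : T, IsChain (· ≤ ·) {s : T | s < t}

/-- `ht` is *the* height function of the tree: it is strictly monotone on comparable pairs and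
the heights of the strict predecessors of `t` are exactly the ordinals below `ht t`; together
with `PredsChain` this says that the set `t↓` of strict predecessors of `t` is well-ordered
with order type `ht t`. -/
def IsHeightFun (ht : T → Ordinal) : Prop :=
  (∀ s t : T, s < t → ht s < ht t) ∧
  ∀ t : T, ∀ o : Ordinal, o < ht t → ∃ s : T, s < t ∧ ht s = o

/-- The tree has height `ω₁`: every node has height `< ω₁` and every countable ordinal is the
height of some node. -/
def HeightOmega1 (ht : T → Ordinal) : Prop :=
  (∀ t : T, ht t < omega1) ∧ ∀ o : Ordinal, o < omega1 → ∃ t : T, ht t = o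

/-- All levels of the tree are countable. -/
def CountableLevels (ht : T → Ordinal) : Prop :=
  ∀ o : Ordinal, {t : T | ht t = o}.Countable

/-- A tree of height `ω₁` is well-pruned if every node has successors in all later levels. -/
def WellPruned (ht : T → Ordinal) : Prop :=
  ∀ o o' : Ordinal, o < o' → o' < omega1 →
    ∀ s : T, ht s = o → ∃ t : T, s < t ∧ ht t = o'

/-- A special subset of a tree: a union of countably many antichains. -/
def IsSpecialSet (U : Set T) : Prop :=
  ∃ A : ℕ → Set T, (∀ n : ℕ, IsAntichain (· ≤ ·) (A n)) ∧ U ⊆ ⋃ n, A n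

/-- Membership in the ideal `NS^T`: there is a regressive map on `B` all of whose fibers
are special. -/
def InNS [OrderBot T] (B : Set T) : Prop :=
  ∃ f : T → T, (∀ t ∈ B, t ≠ ⊥ → f t < t) ∧
    ∀ t : T, IsSpecialSet {s : T | s ∈ B ∧ f s = t}

/-- The diamond principle `◊_T` for a tree `T`. -/
def DiamondTree (T : Type*) [PartialOrder T] [OrderBot T] : Prop :=
  ∃ D : T → Set T, (∀ t : T, D t ⊆ Set.Iio t) ∧
    ∀ X : Set T, ¬ InNS {t : T | X ∩ Set.Iio t = D t}

end TreeDefs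

/-- Club subsets of `ω₁`: closed and unbounded in `ω₁`. -/
def IsClubIn (C : Set Ordinal) : Prop :=
  C ⊆ Set.Iio omega1 ∧
  (∀ o : Ordinal, o < omega1 → ∃ b ∈ C, o < b) ∧
  ∀ o : Ordinal, o < omega1 → (C ∩ Set.Iio o).Nonempty →
    IsLUB (C ∩ Set.Iio o) o → o ∈ C

/-- Stationary subsets of `ω₁`: sets meeting every club. -/
def IsStationaryIn (S : Set Ordinal) : Prop :=
  ∀ C : Set Ordinal, IsClubIn C → (S ∩ C).Nonempty

/-- The diamond principle `◊(S)` for `S ⊆ ω₁`;  `◊` is `DiamondOn (Set.Iio omega1)`. -/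
def DiamondOn (S : Set Ordinal) : Prop :=
  ∃ D : Ordinal → Set Ordinal, (∀ o ∈ S, D o ⊆ Set.Iio o) ∧
    ∀ X : Set Ordinal, X ⊆ Set.Iio omega1 →
      IsStationaryIn {o ∈ S | X ∩ Set.Iio o = D o}

/-- The principle `◊*`: a sequence of countable families `𝒟_α` of subsets of `α` such that
every `X ⊆ ω₁` satisfies `X ∩ α ∈ 𝒟_α` on a club of `α < ω₁`. -/
def DiamondStar : Prop :=
  ∃ D : Ordinal.{0} → Set (Set Ordinal.{0}),
    (∀ o : Ordinal, o < omega1 → (∀ A ∈ D o, A ⊆ Set.Iio o) ∧ (D o).Countable) ∧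
    ∀ X : Set Ordinal, X ⊆ Set.Iio omega1 →
      ∃ C : Set Ordinal, IsClubIn C ∧ ∀ o ∈ C, X ∩ Set.Iio o ∈ D o

/-!
Code the nodes of `T` injectively by countable ordinals `ω · ht t + k`, so that at every fixed
point `α` of `β ↦ ω · β` the nodes below level `α` have codes below `α`. Enumerating each
`𝒟_α` as `(G α n)ₙ` yields countably many candidate sequences
`Dⁿ_t = {s < t | code s n ∈ G (ht t) n}`. If none of them were a `◊_T`-sequence, choose
witnesses `Xₙ`; `◊*` applied to the joint code of all `Xₙ` gives a club of levels at each of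
which every node `t` satisfies `Xₙ ∩ t↓ = Dⁿ_t` for some `n`. The nodes off a club lie in
`NS^T` (send each to its predecessor at the last club level below it), and `NS^T` is a
`σ`-ideal, so `T ∈ NS^T`. But then `T` is special: colour each fibre of the regressive map
by countably many antichains; the sequence of colours along the iterates of the map is
injective on chains.
-/

open Set Ordinal

universe u v

lemma add_one_lt_omega1 {o : Ordinal.{v}} (ho : o < omega1) : o + 1 < omega1 :=
  isPrincipal_add_omega 1 ho (one_lt_omega0.trans omega0_lt_omega_one)

lemma omega0_mul_lt_omega1 {o : Ordinal.{v}} (ho : o < omega1) : ω * o < omega1 :=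
  isPrincipal_mul_omega 1 omega0_lt_omega_one ho

open Cardinal in
lemma countable_Iic_of_lt_omega1 {o : Ordinal.{0}} (ho : o < omega1) : (Iic o).Countable := by
  rw [← le_aleph0_iff_set_countable, ← Order.Iio_succ, Cardinal.mk_Iio_ordinal, lift_le_aleph0,
    ← Order.lt_succ_iff, succ_aleph0, ← lt_ord, ord_aleph, Order.succ_eq_add_one]
  exact add_one_lt_omega1 ho

lemma IsClubIn.sSup_inter_Iio_lt {C : Set Ordinal.{0}} (hC : IsClubIn C) {α : Ordinal.{0}}
    (hα : α < omega1) (hαC : α ∉ C) (hα0 : α ≠ 0) : sSup (C ∩ Iio α) < α := by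
  refine (csSup_le' fun c hc => hc.2.le).lt_of_ne fun hsup => ?_
  rcases (C ∩ Iio α).eq_empty_or_nonempty with hempty | hne
  · exact hα0 (by rwa [hempty, csSup_empty, eq_comm] at hsup)
  · have hlub := isLUB_csSup hne ⟨α, fun c hc => hc.2.le⟩
    rw [hsup] at hlub
    exact hαC (hC.2.2 α hα hne hlub)

open Cardinal in
lemma isClubIn_fixedPoints {f : Ordinal.{0} → Ordinal.{0}} (hf : Order.IsNormal f)
    (hf_lt : ∀ β < omega1, f β < omega1) :
    IsClubIn (Function.fixedPoints f ∩ Iio omega1) := by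
  refine ⟨inter_subset_right, fun o ho => ?_, fun α hα hne hlub => ⟨?_, hα⟩⟩
  · have hcof : ℵ₀ < (omega1 : Ordinal.{0}).cof := by simp [omega1]
    refine ⟨nfp f (o + 1), ⟨nfp_fp hf _, nfp_lt_ord hcof hf_lt ?_⟩,
      (Order.lt_succ o).trans_le (le_nfp f _)⟩
    exact add_one_lt_omega1 ho
  · refine (hf.map_isLUB hlub hne).unique ?_
    rwa [image_congr fun β hβ => hβ.1.1, image_id']

section Special

variable {T : Type u} [PartialOrder T]

lemma isSpecialSet_of_subset_iUnion {ι : Type*} [Countable ι] {U : Set T} (A : ι → Set T)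
    (hA : ∀ i, IsAntichain (· ≤ ·) (A i)) (hU : U ⊆ ⋃ i, A i) : IsSpecialSet U := by
  cases isEmpty_or_nonempty ι
  · refine ⟨fun _ => ∅, fun _ => subsingleton_empty.isAntichain _, ?_⟩
    simpa using hU
  · obtain ⟨e, he⟩ := exists_surjective_nat ι
    exact ⟨A ∘ e, fun n => hA (e n), by rwa [← he.iUnion_comp] at hU⟩

lemma IsSpecialSet.mono {U V : Set T} (hV : IsSpecialSet V) (hUV : U ⊆ V) : IsSpecialSet U :=
  let ⟨A, hA, hVA⟩ := hV
  ⟨A, hA, hUV.trans hVA⟩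

lemma IsSpecialSet.iUnion {ι : Type*} [Countable ι] {U : ι → Set T}
    (hU : ∀ i, IsSpecialSet (U i)) : IsSpecialSet (⋃ i, U i) := by
  choose A hA hUA using hU
  refine isSpecialSet_of_subset_iUnion (fun p : ι × ℕ => A p.1 p.2) (fun p => hA p.1 p.2) ?_
  simp only [iUnion_subset_iff]
  intro i t ht
  obtain ⟨n, hn⟩ := mem_iUnion.1 (hUA i ht)
  exact mem_iUnion.2 ⟨(i, n), hn⟩

lemma Set.Countable.isSpecialSet {U : Set T} (hU : U.Countable) : IsSpecialSet U := by
  have := hU.to_subtype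
  exact isSpecialSet_of_subset_iUnion (fun t : U => {t.1})
    (fun _ => subsingleton_singleton.isAntichain _) fun t ht => mem_iUnion.2 ⟨⟨t, ht⟩, rfl⟩

lemma IsSpecialSet.exists_colouring {U : Set T} (hU : IsSpecialSet U) :
    ∃ c : T → ℕ, ∀ s ∈ U, ∀ t ∈ U, s < t → c s ≠ c t := by
  obtain ⟨A, hA, hUA⟩ := hU
  choose! c hc using fun t (ht : t ∈ U) => mem_iUnion.1 (hUA ht)
  refine ⟨c, fun s hs t ht hst hc_eq => hA (c s) (hc s hs) ?_ hst.ne hst.le⟩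
  rw [hc_eq]
  exact hc t ht

lemma isSpecialSet_univ_of_ne_of_lt {ι : Type*} [Countable ι] (c : T → ι)
    (hc : ∀ s t, s < t → c s ≠ c t) : IsSpecialSet (univ : Set T) :=
  isSpecialSet_of_subset_iUnion (fun i => c ⁻¹' {i})
    (fun _ _ hs _ ht hne hle => hc _ _ (hle.lt_of_ne hne) (hs.trans ht.symm))
    fun t _ => mem_iUnion.2 ⟨c t, rfl⟩

end Special

section History

variable {T : Type u} [PartialOrder T] [WellFoundedLT T]

open scoped Classical in
noncomputable def history (f : T → T) (c : T → T → ℕ) : T → List ℕ :=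
  wellFounded_lt.fix fun t ih => if hft : f t < t then c (f t) t :: ih (f t) hft else []

open scoped Classical in
lemma history_eq (f : T → T) (c : T → T → ℕ) (t : T) :
    history f c t = if f t < t then c (f t) t :: history f c (f t) else [] := by
  rw [history, WellFounded.fix_eq]
  split_ifs <;> rfl

lemma history_ne_of_lt [OrderBot T] (hchain : PredsChain T) {f : T → T} {c : T → T → ℕ}
    (hf : ∀ t ≠ ⊥, f t < t) (hc : ∀ s t, s < t → f s = f t → c (f s) s ≠ c (f t) t)
    {x y : T} (hxy : x < y) : history f c x ≠ history f c y := by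
  induction y using WellFoundedLT.induction generalizing x with
  | _ y ih =>
  have hy : f y < y := hf y (ne_bot_of_gt hxy)
  rw [history_eq f c x, history_eq f c y, if_pos hy]
  split_ifs with hx
  · intro heq
    obtain ⟨hcol, hhist⟩ := List.cons_eq_cons.1 heq
    rcases eq_or_ne (f x) (f y) with hfxy | hfxy
    · exact hc x y hxy hfxy hcol
    · rcases hchain y (hx.trans hxy) hy hfxy with hle | hle
      · exact ih (f y) hy (hle.lt_of_ne hfxy) hhist
      · exact ih (f x) (hx.trans hxy) (hle.lt_of_ne hfxy.symm) hhist.symm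
  · exact (List.cons_ne_nil _ _).symm

lemma isSpecialSet_univ_of_inNS_univ [OrderBot T] (hchain : PredsChain T)
    (hT : InNS (univ : Set T)) : IsSpecialSet (univ : Set T) := by
  obtain ⟨f, hf, hfib⟩ := hT
  choose c hc using fun u => (hfib u).exists_colouring
  refine isSpecialSet_univ_of_ne_of_lt (history f c) fun x y hxy =>
    history_ne_of_lt hchain (fun t => hf t trivial) (fun s t hst hft => ?_) hxy
  rw [hft]
  exact hc (f t) s ⟨trivial, hft⟩ t ⟨trivial, rfl⟩ hst

end History

section NS

variable {T : Type u} [PartialOrder T] [OrderBot T]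

lemma InNS.mono {B B' : Set T} (hB : InNS B) (hB' : B' ⊆ B) : InNS B' := by
  obtain ⟨f, hf, hfib⟩ := hB
  exact ⟨f, fun t ht => hf t (hB' ht), fun u => (hfib u).mono fun s hs => ⟨hB' hs.1, hs.2⟩⟩

lemma InNS.iUnion {ι : Type*} [Countable ι] {B : ι → Set T} (hB : ∀ i, InNS (B i)) :
    InNS (⋃ i, B i) := by
  cases isEmpty_or_nonempty ι
  · rw [iUnion_of_empty]
    exact ⟨id, fun _ h => h.elim, fun _ => countable_empty.isSpecialSet.mono fun _ h => h.1⟩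
  choose f hf hfib using hB
  choose! i hi using fun t (ht : t ∈ ⋃ i, B i) => mem_iUnion.1 ht
  refine ⟨fun t => f (i t) t, fun t ht => hf (i t) t (hi t ht), fun u => ?_⟩
  refine (IsSpecialSet.iUnion fun j => hfib j u).mono ?_
  rintro s ⟨hs, rfl⟩
  exact mem_iUnion.2 ⟨i s, hi s hs, rfl⟩

lemma InNS.union {B B' : Set T} (hB : InNS B) (hB' : InNS B') : InNS (B ∪ B') := by
  rw [union_eq_iUnion]
  exact InNS.iUnion (Bool.forall_bool.2 ⟨hB', hB⟩)

end NS

section Height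

variable {T : Type u}

lemma countable_setOf_height_le {h : T → Ordinal.{0}} (hlev : CountableLevels h)
    {d : Ordinal.{0}} (hd : d < omega1) : {t | h t ≤ d}.Countable := by
  refine .mono ?_ ((countable_Iic_of_lt_omega1 hd).biUnion fun o _ => hlev o)
  exact fun t ht => mem_biUnion ht rfl

variable [PartialOrder T]

lemma IsHeightFun.strictMono {h : T → Ordinal.{v}} (hh : IsHeightFun h) : StrictMono h :=
  fun s t => hh.1 s t

lemma IsHeightFun.height_ne_zero [OrderBot T] {h : T → Ordinal.{v}} (hh : IsHeightFun h)
    {t : T} (ht : t ≠ ⊥) : h t ≠ 0 :=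
  (pos_of_gt (hh.1 ⊥ t (bot_lt_iff_ne_bot.2 ht))).ne'

/-- Send each node to its predecessor at the last level of `C` below it. -/
lemma inNS_setOf_height_notMem [OrderBot T] {h : T → Ordinal.{0}} (hh : IsHeightFun h)
    (hlt : ∀ t, h t < omega1) (hlev : CountableLevels h) {C : Set Ordinal.{0}}
    (hC : IsClubIn C) : InNS {t | h t ∉ C} := by
  choose! pred hpred_lt hpred_height using hh.2
  have hlast : ∀ t, h t ∉ C → h t ≠ 0 → sSup (C ∩ Iio (h t)) < h t :=
    fun t htC ht0 => hC.sSup_inter_Iio_lt (hlt t) htC ht0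
  refine ⟨fun t => pred t (sSup (C ∩ Iio (h t))),
    fun t htC ht => hpred_lt t _ (hlast t htC (hh.height_ne_zero ht)), fun u => ?_⟩
  obtain ⟨d, hdC, hud⟩ := hC.2.1 (h u) (hlt u)
  refine (countable_setOf_height_le hlev (hC.1 hdC)).isSpecialSet.mono ?_
  rintro s ⟨hsC, rfl⟩
  show h s ≤ d
  by_contra! hds
  have hlast_s := hlast s hsC (pos_of_gt hds).ne'
  have hd_le : d ≤ sSup (C ∩ Iio (h s)) := le_csSup ⟨h s, fun c hc => hc.2.le⟩ ⟨hdC, hds⟩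
  rw [hpred_height s _ hlast_s] at hud
  exact hud.not_ge hd_le

lemma IsHeightFun.exists_lift_down {ht : T → Ordinal.{v}} (hht : IsHeightFun ht)
    (hlt : ∀ t, ht t < omega1) (hlev : CountableLevels ht) :
    ∃ h : T → Ordinal.{0}, IsHeightFun h ∧ (∀ t, h t < omega1) ∧ CountableLevels h := by
  choose h hh using fun t => Ordinal.mem_range_lift_of_le.{0, v} (a := omega1) (b := ht t)
    (by rw [omega1, lift_omega, lift_one]; exact (hlt t).le)
  refine ⟨h, ⟨fun s t hst => lift_lt.1 ?_, fun t o ho => ?_⟩, fun t => ?_, fun o => ?_⟩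
  · rw [hh s, hh t]
    exact hht.1 s t hst
  · obtain ⟨s, hst, hs⟩ := hht.2 t (lift.{v} o) (by rw [← hh t]; exact lift_lt.2 ho)
    exact ⟨s, hst, lift_inj.1 (by rw [hh s, hs])⟩
  · exact lift_lt_omega_one.1 (by rw [hh t]; exact hlt t)
  · refine (hlev (lift.{v} o)).mono fun t (ht : h t = o) => ?_
    rw [mem_ofPred_eq, ← hh t, ht]

end Height

section Diamond

variable {T : Type u}

lemma exists_injective2_code {h : T → Ordinal.{v}} (hlev : CountableLevels h) :
    ∃ q : T → ℕ → Ordinal.{v}, Function.Injective2 q ∧ ∀ t n, q t n < ω * (h t + 1) := by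
  choose e he using fun o => countable_iff_exists_injOn.1 (hlev o)
  refine ⟨fun t n => ω * h t + Nat.pair (e (h t) t) n, fun s t m n hq => ?_, fun t n => ?_⟩
  · have hdiv := congrArg (· / ω) hq
    have hmod := congrArg (· % ω) hq
    simp only [mul_add_div _ omega0_ne_zero, div_eq_zero_of_lt (natCast_lt_omega0 _), add_zero,
      mul_add_mod_self, mod_eq_of_lt (natCast_lt_omega0 _), Nat.cast_inj] at hdiv hmod
    obtain ⟨he_eq, rfl⟩ := Nat.pair_eq_pair.1 hmod
    rw [hdiv] at he_eq
    exact ⟨he (h t) hdiv rfl he_eq, rfl⟩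
  · rw [mul_add_one]
    exact add_lt_add_right (natCast_lt_omega0 _) _

variable [PartialOrder T]

lemma DiamondStar.exists_enumeration (hstar : DiamondStar) :
    ∃ G : Ordinal.{0} → ℕ → Set Ordinal.{0}, ∀ X ⊆ Iio omega1,
      ∃ C, IsClubIn C ∧ ∀ α ∈ C, ∃ n, G α n = X ∩ Iio α := by
  obtain ⟨D, hD, hguess⟩ := hstar
  have hG : ∀ α, ∃ g : ℕ → Set Ordinal.{0}, α < omega1 → D α ⊆ range g := by
    intro α
    by_cases hα : α < omega1
    · obtain ⟨g, hg⟩ := countable_iff_exists_subset_range.1 (hD α hα).2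
      exact ⟨g, fun _ => hg⟩
    · exact ⟨fun _ => ∅, fun h => (hα h).elim⟩
  choose G hG using hG
  refine ⟨G, fun X hX => ?_⟩
  obtain ⟨C, hC, hCX⟩ := hguess X hX
  exact ⟨C, hC, fun α hα => hG α (hC.1 hα) (hCX α hα)⟩

def decodedGuess (h : T → Ordinal.{0}) (q : T → ℕ → Ordinal.{0})
    (G : Ordinal.{0} → ℕ → Set Ordinal.{0}) (n : ℕ) (t : T) : Set T :=
  {s | s < t ∧ q s n ∈ G (h t) n}

lemma inter_Iio_eq_decodedGuess {h : T → Ordinal.{0}} (hh : StrictMono h)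
    {q : T → ℕ → Ordinal.{0}} (hq : Function.Injective2 q) (hq_lt : ∀ t n, q t n < ω * (h t + 1))
    {G : Ordinal.{0} → ℕ → Set Ordinal.{0}} (X : ℕ → Set T) {t : T} {k : ℕ}
    (hfix : ω * h t = h t) (hk : G (h t) k = (⋃ n, (q · n) '' X n) ∩ Iio (h t)) :
    X k ∩ Iio t = decodedGuess h q G k t := by
  ext s
  simp only [decodedGuess, hk, mem_inter_iff, mem_Iio, mem_ofPred_eq, mem_iUnion, mem_image]
  constructor
  · rintro ⟨hs, hst⟩
    refine ⟨hst, ⟨k, s, hs, rfl⟩, (hq_lt s k).trans_le ?_⟩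
    rw [← hfix]
    exact mul_le_mul_right (Order.add_one_le_of_lt (hh hst)) ω
  · rintro ⟨hst, ⟨n, s', hs', hq_eq⟩, -⟩
    obtain ⟨rfl, rfl⟩ := hq hq_eq
    exact ⟨hs', hst⟩

theorem diamondTree_of_diamondStar [OrderBot T] {h : T → Ordinal.{0}} (hh : IsHeightFun h)
    (hlt : ∀ t, h t < omega1) (hlev : CountableLevels h) (hT : ¬ InNS (univ : Set T))
    (hstar : DiamondStar) : DiamondTree T := by
  obtain ⟨q, hq, hq_lt⟩ := exists_injective2_code hlev
  obtain ⟨G, hG⟩ := hstar.exists_enumeration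
  by_contra hdia
  have hX : ∀ n, ∃ X : Set T, InNS {t | X ∩ Iio t = decodedGuess h q G n t} := by
    intro n
    by_contra! hn
    exact hdia ⟨decodedGuess h q G n, fun _ _ hs => hs.1, hn⟩
  choose X hX using hX
  obtain ⟨C, hC, hCX⟩ := hG (⋃ n, (q · n) '' X n) <| by
    rintro _ ⟨_, ⟨n, rfl⟩, s, -, rfl⟩
    exact (hq_lt s n).trans (omega0_mul_lt_omega1 (add_one_lt_omega1 (hlt s)))
  have hFix : IsClubIn (Function.fixedPoints (ω * ·) ∩ Iio omega1) :=
    isClubIn_fixedPoints (isNormal_mul_right omega0_pos) fun _ => omega0_mul_lt_omega1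
  refine hT <| (((inNS_setOf_height_notMem hh hlt hlev hC).union
    (inNS_setOf_height_notMem hh hlt hlev hFix)).union (InNS.iUnion hX)).mono fun t _ => ?_
  by_cases ht : h t ∈ C ∧ h t ∈ Function.fixedPoints (ω * ·) ∩ Iio omega1
  · obtain ⟨k, hk⟩ := hCX _ ht.1
    exact Or.inr (mem_iUnion.2 ⟨k, inter_Iio_eq_decodedGuess hh.strictMono hq hq_lt X ht.2.1 hk⟩)
  · exact Or.inl (not_and_or.1 ht)

end Diamond

theorem stmt15_general {T : Type*} [PartialOrder T] [OrderBot T]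
    (hchain : PredsChain T) (ht : T → Ordinal)
    (hht : IsHeightFun ht) (hΩ : HeightOmega1 ht) (hlev : CountableLevels ht)
    (hns : ¬ IsSpecialSet (Set.univ : Set T))
    (hstar : DiamondStar) :
    DiamondTree T := by
  have : WellFoundedLT T := hht.strictMono.wellFoundedLT
  obtain ⟨h, hh, hlt, hlev⟩ := hht.exists_lift_down hΩ.1 hlev
  exact diamondTree_of_diamondStar hh hlt hlev
    (fun hT => hns (isSpecialSet_univ_of_inNS_univ hchain hT)) hstar

/-- If `T` is a well-pruned nonspecial `ω₁`-tree, then `◊*` implies `◊_T`. -/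
theorem stmt15 {T : Type*} [PartialOrder T] [OrderBot T]
    (hchain : PredsChain T) (ht : T → Ordinal)
    (hht : IsHeightFun ht) (hΩ : HeightOmega1 ht) (hlev : CountableLevels ht)
    (hns : ¬ IsSpecialSet (Set.univ : Set T))
    (hwp : WellPruned ht)
    (hstar : DiamondStar) :
    DiamondTree T :=
  stmt15_general hchain ht hht hΩ hlev hns hstar
end

section
/- Let T be an ω₁-tree and let S ⊆ ω₁ be stationary. Then T is S-st-special if and only if T↾S ∈ NS^T. -/
open Set

/-- `T` is `S`-st-special: there is a function defined on the nodes of nonzero height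
belonging to a level in `S`, taking values `f t ∈ ht t × ω` and injective on chains. -/
def SStSpecial {T : Type*} [PartialOrder T] (ht : T → Ordinal) (S : Set Ordinal) : Prop :=
  ∃ f : T → Ordinal × ℕ,
    (∀ t : T, ht t ∈ S → ht t ≠ 0 → (f t).1 < ht t) ∧
    ∀ s t : T, s < t → ht s ∈ S → ht s ≠ 0 → ht t ∈ S → ht t ≠ 0 → f s ≠ f t

/-! A set is special iff it carries an `ℕ`-colouring injective on chains. Given an
`S`-st-special `f`, sending `t` to its predecessor at height `(f t).1` is regressive, and its
fibres are coloured by `(f t).2`. Conversely, from a regressive `g` with special fibres,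
`t ↦ (ht (g t), colour of t in its fibre)` is injective on chains, since a predecessor of `t`
is determined by its height. -/

theorem isSpecialSet_iff_exists_coloring {T : Type*} [PartialOrder T] {U : Set T} :
    IsSpecialSet U ↔ ∃ c : T → ℕ, ∀ s ∈ U, ∀ t ∈ U, s < t → c s ≠ c t := by
  constructor
  · rintro ⟨A, hA, hU⟩
    have hmem : ∀ s ∈ U, ∃ n, s ∈ A n := fun s hs => mem_iUnion.1 (hU hs)
    choose! c hc using hmem
    refine ⟨c, fun s hs t ht hst hcst => ?_⟩
    exact hA (c s) (hc s hs) (hcst ▸ hc t ht) hst.ne hst.le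
  · rintro ⟨c, hc⟩
    refine ⟨fun n => {s ∈ U | c s = n}, ?_, fun s hs => mem_iUnion.2 ⟨c s, hs, rfl⟩⟩
    rintro n s ⟨hs, rfl⟩ t ⟨ht, hcst⟩ hne hle
    exact hc s hs t ht (hle.lt_of_ne hne) hcst.symm

section Tree

variable {T : Type*} [PartialOrder T] {ht : T → Ordinal}

theorem IsHeightFun.eq_of_lt_of_ht_eq (hchain : PredsChain T) (hht : IsHeightFun ht)
    {a b t : T} (ha : a < t) (hb : b < t) (hab : ht a = ht b) : a = b := by
  by_contra hne
  rcases hchain t ha hb hne with hle | hle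
  · exact (hht.1 _ _ (hle.lt_of_ne hne)).ne hab
  · exact (hht.1 _ _ (hle.lt_of_ne (Ne.symm hne))).ne hab.symm

variable [OrderBot T]

theorem IsHeightFun.ht_bot (hht : IsHeightFun ht) : ht (⊥ : T) = 0 := by
  by_contra h
  obtain ⟨s, hs, -⟩ := hht.2 ⊥ 0 (pos_iff_ne_zero.2 h)
  exact not_lt_bot hs

theorem IsHeightFun.ht_eq_zero_iff (hht : IsHeightFun ht) {t : T} : ht t = 0 ↔ t = ⊥ := by
  refine ⟨fun h0 => ?_, fun h => h ▸ hht.ht_bot⟩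
  by_contra hne
  have := hht.1 ⊥ t (bot_lt_iff_ne_bot.2 hne)
  rw [hht.ht_bot, h0] at this
  exact this.false

theorem SStSpecial.inNS (hht : IsHeightFun ht) {S : Set Ordinal} (hS : SStSpecial ht S) :
    InNS {t : T | ht t ∈ S} := by
  classical
  obtain ⟨f, hf_lt, hf_ne⟩ := hS
  choose pred hpred_lt hpred_ht using hht.2
  let D : T → Prop := fun t => ht t ∈ S ∧ ht t ≠ 0
  let g : T → T := fun t => if h : D t then pred t (f t).1 (hf_lt t h.1 h.2) else ⊥
  have hg : ∀ t, (h : D t) → g t < t ∧ ht (g t) = (f t).1 := fun t h => by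
    simp only [g, dif_pos h]
    exact ⟨hpred_lt .., hpred_ht ..⟩
  refine ⟨g, fun t htS hne => (hg t ⟨htS, mt hht.ht_eq_zero_iff.1 hne⟩).1, fun t => ?_⟩
  -- `⊥` may lie in a fibre, and gets a colour of its own.
  refine isSpecialSet_iff_exists_coloring.2
    ⟨fun s => if ht s = 0 then 0 else (f s).2 + 1, ?_⟩
  rintro s ⟨hsS, rfl⟩ s' ⟨hs'S, hgs'⟩ hss' hc
  have hs'0 : ht s' ≠ 0 := mt hht.ht_eq_zero_iff.1 (ne_bot_of_gt hss')
  by_cases hs0 : ht s = 0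
  · simp [hs0, hs'0] at hc
  · simp only [if_neg hs0, if_neg hs'0, add_left_inj] at hc
    obtain ⟨-, hgs⟩ := hg s ⟨hsS, hs0⟩
    obtain ⟨-, hgs'_ht⟩ := hg s' ⟨hs'S, hs'0⟩
    refine hf_ne s s' hss' hsS hs0 hs'S hs'0 (Prod.ext ?_ hc)
    rw [← hgs, ← hgs'_ht, hgs']

theorem InNS.sStSpecial (hchain : PredsChain T) (hht : IsHeightFun ht) {S : Set Ordinal}
    (hS : InNS {t : T | ht t ∈ S}) : SStSpecial ht S := by
  obtain ⟨g, hg_lt, hfib⟩ := hS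
  choose c hc using fun t => isSpecialSet_iff_exists_coloring.1 (hfib t)
  have hg_lt' : ∀ t, ht t ∈ S → ht t ≠ 0 → g t < t := fun t htS h0 =>
    hg_lt t htS (mt hht.ht_eq_zero_iff.2 h0)
  refine ⟨fun s => (ht (g s), c (g s) s), fun t htS h0 => hht.1 _ _ (hg_lt' t htS h0), ?_⟩
  intro s t hst hsS hs0 htS ht0 heq
  have hheight : ht (g s) = ht (g t) := congrArg Prod.fst heq
  have hcol : c (g s) s = c (g t) t := congrArg Prod.snd heq
  have hgg : g s = g t :=
    hht.eq_of_lt_of_ht_eq hchain ((hg_lt' s hsS hs0).trans hst) (hg_lt' t htS ht0) hheight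
  rw [hgg] at hcol
  exact hc (g t) s ⟨hsS, hgg⟩ t ⟨htS, rfl⟩ hst hcol

end Tree

theorem stmt19_general {T : Type*} [PartialOrder T] [OrderBot T]
    (hchain : PredsChain T) (ht : T → Ordinal)
    (hht : IsHeightFun ht)
    (S : Set Ordinal) :
    SStSpecial ht S ↔ InNS {t : T | ht t ∈ S} :=
  ⟨SStSpecial.inNS hht, InNS.sStSpecial hchain hht⟩

/-- Let `T` be an `ω₁`-tree and let `S ⊆ ω₁` be stationary. Then `T` is
`S`-st-special if and only if `T ↾ S ∈ NS^T`. -/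
theorem stmt19 {T : Type*} [PartialOrder T] [OrderBot T]
    (hchain : PredsChain T) (ht : T → Ordinal)
    (hht : IsHeightFun ht) (hΩ : HeightOmega1 ht) (hlev : CountableLevels ht)
    (S : Set Ordinal) (hSsub : S ⊆ Set.Iio omega1) (hSstat : IsStationaryIn S) :
    SStSpecial ht S ↔ InNS {t : T | ht t ∈ S} :=
  stmt19_general hchain ht hht S
end
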